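/- A class [m] ∈ EC(M^#) is an isolated point of the divisor topology D(M) if and only if m is irreducible on M^#, i.e., whenever m₁ ∈ M^# divides m, then m divides m₁. -/

import Mathlib

open Submodule

variable (R M : Type) [CommRing R] [IsDomain R] [AddCommGroup M] [Module R M]

/-- The set of nonzero nongenerators of `M`. -/
def Msharp : Set M := {m | m ≠ 0 ∧ Submodule.span R {m} ≠ ⊤}

/-- Equivalence: `m ∼ n` iff `Rm = Rn`. -/
def divSetoid : Setoid (Msharp R M) :=
  ⟨fun a b => Submodule.span R {a.1} = Submodule.span R {b.1},
    ⟨fun _ => rfl, fun h => h.symm, fun h₁ h₂ => h₁.trans h₂⟩⟩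

/-- `EC(M^#)`: the set of equivalence classes. -/
def EC := Quotient (divSetoid R M)

/-- The class `[n]` of `n ∈ M^#`. -/
def cls (n : Msharp R M) : EC R M := Quotient.mk (divSetoid R M) n

/-- `U_m = {[n] : n ∣ m}` where `n ∣ m` means `m ∈ Rn`. -/
def Uset (m : M) : Set (EC R M) :=
  {c | ∃ n : Msharp R M, cls R M n = c ∧ m ∈ Submodule.span R {n.1}}

/-- The divisor topology `D(M)`. -/
def divTop : TopologicalSpace (EC R M) :=
  TopologicalSpace.generateFrom {s | ∃ m ∈ Msharp R M, s = Uset R M m}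

section

variable {R M}

omit [IsDomain R]

theorem cls_eq_cls_iff {a b : Msharp R M} :
    cls R M a = cls R M b ↔ span R {a.1} = span R {b.1} :=
  Quotient.eq

theorem cls_mem_Uset_iff {n : Msharp R M} {m : M} :
    cls R M n ∈ Uset R M m ↔ m ∈ span R {n.1} := by
  constructor
  · rintro ⟨n', hn', hm⟩
    exact (cls_eq_cls_iff.1 hn') ▸ hm
  · exact fun hm => ⟨n, rfl, hm⟩

theorem isOpen_Uset {m : M} (hm : m ∈ Msharp R M) : (divTop R M).IsOpen (Uset R M m) :=
  TopologicalSpace.GenerateOpen.basic _ ⟨m, hm, rfl⟩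

def IsDivisorClosed (U : Set (EC R M)) : Prop :=
  ∀ a b : Msharp R M, cls R M a ∈ U → a.1 ∈ span R {b.1} → cls R M b ∈ U

theorem isDivisorClosed_Uset (m : M) : IsDivisorClosed (Uset R M m) := by
  intro a b ha hab
  rw [cls_mem_Uset_iff] at ha ⊢
  exact (span_singleton_le_iff_mem _ _).2 hab ha

theorem IsDivisorClosed.inter {U V : Set (EC R M)} (hU : IsDivisorClosed U)
    (hV : IsDivisorClosed V) : IsDivisorClosed (U ∩ V) :=
  fun a b ha hab => ⟨hU a b ha.1 hab, hV a b ha.2 hab⟩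

theorem IsDivisorClosed.sUnion {S : Set (Set (EC R M))} (hS : ∀ U ∈ S, IsDivisorClosed U) :
    IsDivisorClosed (⋃₀ S) := by
  rintro a b ⟨U, hU, ha⟩ hab
  exact ⟨U, hU, hS U hU a b ha hab⟩

theorem isDivisorClosed_of_isOpen {U : Set (EC R M)} (hU : (divTop R M).IsOpen U) :
    IsDivisorClosed U := by
  induction hU with
  | basic s hs =>
    obtain ⟨m, -, rfl⟩ := hs
    exact isDivisorClosed_Uset m
  | univ => exact fun _ _ _ _ => trivial
  | inter U V _ _ hU hV => exact hU.inter hV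
  | sUnion S _ hS => exact IsDivisorClosed.sUnion hS

theorem Uset_eq_singleton {m : Msharp R M}
    (hirr : ∀ m₁ : Msharp R M, m.1 ∈ span R {m₁.1} → m₁.1 ∈ span R {m.1}) :
    Uset R M m.1 = {cls R M m} := by
  ext c
  induction c using Quotient.inductionOn with | h n => ?_
  change cls R M n ∈ _ ↔ cls R M n = cls R M m
  rw [cls_mem_Uset_iff, cls_eq_cls_iff]
  refine ⟨fun hmn => le_antisymm ?_ ?_, fun h => h ▸ mem_span_singleton_self _⟩
  · exact (span_singleton_le_iff_mem _ _).2 (hirr n hmn)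
  · exact (span_singleton_le_iff_mem _ _).2 hmn

end

theorem isolated_iff_irreducible (m : Msharp R M) :
    (divTop R M).IsOpen {cls R M m} ↔
      ∀ m₁ : Msharp R M, m.1 ∈ Submodule.span R {m₁.1} → m₁.1 ∈ Submodule.span R {m.1} := by
  refine ⟨fun h m₁ hm₁ => ?_, fun hirr => Uset_eq_singleton hirr ▸ isOpen_Uset m.2⟩
  have hcls : cls R M m₁ = cls R M m := isDivisorClosed_of_isOpen h m m₁ rfl hm₁
  exact cls_eq_cls_iff.1 hcls ▸ mem_span_singleton_self _
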